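/- Define K : 𝒟₁(ℝ) → ℝ by K(ν) := 1 if ν([0, ∞)) = 1, and K(ν) := 0 otherwise. Then: (a) K is indifferent to mixtures; and (b) K is not an expected utility, i.e. there is no Borel measurable f : ℝ → ℝ that is integrable with respect to every ν ∈ 𝒟₁(ℝ) and satisfies K(ν) = ∫ f dν for all ν ∈ 𝒟₁(ℝ). -/

import Mathlib

open MeasureTheory ProbabilityTheory

noncomputable section

/-- Finite first moment for a measure on ℝ. -/
def FiniteFirstMomentR (ν : Measure ℝ) : Prop :=
  Integrable (fun x : ℝ => |x|) ν

/-- `K` is indifferent to mixtures (measures on ℝ). -/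
def IndiffMixturesR (K : Measure ℝ → ℝ) : Prop :=
  ∀ (I : Type) [MeasurableSpace I], ∀ lam : Measure I, IsProbabilityMeasure lam →
    ∀ η η' : Kernel I ℝ, IsMarkovKernel η → IsMarkovKernel η' →
      (∀ i, FiniteFirstMomentR (η i)) → (∀ i, FiniteFirstMomentR (η' i)) →
      FiniteFirstMomentR (lam.bind (fun i => η i)) →
      FiniteFirstMomentR (lam.bind (fun i => η' i)) →
      (∀ i, K (η' i) ≤ K (η i)) →
      K (lam.bind (fun i => η' i)) ≤ K (lam.bind (fun i => η i))

/-- The functional "`1` if the distribution is supported on `[0, ∞)`, else `0`". -/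
def Kpos (ν : Measure ℝ) : ℝ :=
  if ν (Set.Ici (0 : ℝ)) = 1 then 1 else 0

/-!
A mixture gives full mass to `[0, ∞)` exactly when almost every component does, so `Kpos` of a
mixture is the minimum of `Kpos` over almost all components, which is monotone in the
components. On the other hand an expected utility `f` is pinned down by `f x = K δ_x`, and it
averages: it assigns `1/2` to the half-half mixture of `δ_{-1}` and `δ_1`, a value `Kpos` never
takes.
-/

namespace MeasureTheory.Measure

theorem bind_apply_eq_one_iff {I α : Type*} [MeasurableSpace I] [MeasurableSpace α]
    {μ : Measure I} [IsProbabilityMeasure μ] {κ : Kernel I α} [IsMarkovKernel κ]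
    {s : Set α} (hs : MeasurableSet s) :
    μ.bind (fun i => κ i) s = 1 ↔ ∀ᵐ i ∂μ, κ i s = 1 := by
  have : IsProbabilityMeasure (μ.bind fun i => κ i) :=
    isProbabilityMeasure_bind κ.measurable.aemeasurable (.of_forall fun _ => inferInstance)
  rw [← prob_compl_eq_zero_iff hs, bind_apply hs.compl κ.measurable.aemeasurable,
    lintegral_eq_zero_iff (κ.measurable_coe hs.compl)]
  simp only [Filter.EventuallyEq, Pi.zero_apply, prob_compl_eq_zero_iff hs]

end MeasureTheory.Measure

theorem Kpos_eq_one_iff (ν : Measure ℝ) : Kpos ν = 1 ↔ ν (Set.Ici 0) = 1 := by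
  unfold Kpos; split_ifs with h <;> simp [h]

theorem Kpos_le_Kpos_iff (μ ν : Measure ℝ) : Kpos μ ≤ Kpos ν ↔ (Kpos μ = 1 → Kpos ν = 1) := by
  unfold Kpos; split_ifs <;> norm_num

theorem Kpos_ne_half (ν : Measure ℝ) : Kpos ν ≠ 1 / 2 := by
  unfold Kpos; split_ifs <;> norm_num

theorem Kpos_dirac (x : ℝ) : Kpos (Measure.dirac x) = if 0 ≤ x then 1 else 0 := by
  by_cases hx : 0 ≤ x <;> simp [Kpos, hx]

theorem Kpos_bind_eq_one_iff {I : Type*} [MeasurableSpace I] {μ : Measure I}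
    [IsProbabilityMeasure μ] {κ : Kernel I ℝ} [IsMarkovKernel κ] :
    Kpos (μ.bind fun i => κ i) = 1 ↔ ∀ᵐ i ∂μ, Kpos (κ i) = 1 := by
  simp only [Kpos_eq_one_iff]
  exact Measure.bind_apply_eq_one_iff measurableSet_Ici

theorem Kpos_indiffMixtures : IndiffMixturesR Kpos := by
  intro I _ _ _ η η' _ _ _ _ _ _ hle
  simp only [Kpos_le_Kpos_iff, Kpos_bind_eq_one_iff] at hle ⊢
  exact fun h => h.mono hle

theorem finiteFirstMomentR_dirac (x : ℝ) : FiniteFirstMomentR (Measure.dirac x) :=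
  integrable_dirac enorm_lt_top

def IsExpectedUtilityR (K : Measure ℝ → ℝ) (f : ℝ → ℝ) : Prop :=
  Measurable f ∧
    (∀ ν : Measure ℝ, IsProbabilityMeasure ν → FiniteFirstMomentR ν → Integrable f ν) ∧
    (∀ ν : Measure ℝ, IsProbabilityMeasure ν → FiniteFirstMomentR ν → K ν = ∫ x, f x ∂ν)

namespace IsExpectedUtilityR

variable {K : Measure ℝ → ℝ} {f : ℝ → ℝ}

theorem apply_eq (h : IsExpectedUtilityR K f) (x : ℝ) : f x = K (Measure.dirac x) := by
  rw [h.2.2 _ inferInstance (finiteFirstMomentR_dirac x), integral_dirac]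

theorem midpoint_dirac (h : IsExpectedUtilityR K f) (x y : ℝ) :
    K ((2⁻¹ : ENNReal) • (Measure.dirac x + Measure.dirac y)) =
      (K (Measure.dirac x) + K (Measure.dirac y)) / 2 := by
  set ν := (2⁻¹ : ENNReal) • (Measure.dirac x + Measure.dirac y)
  have hprob : IsProbabilityMeasure ν := ⟨by simp [ν, ENNReal.inv_two_add_inv_two]⟩
  have hmom : FiniteFirstMomentR ν :=
    ((finiteFirstMomentR_dirac x).add_measure (finiteFirstMomentR_dirac y)).smul_measure
      (by norm_num)
  have hint : Integrable f (Measure.dirac x + Measure.dirac y) :=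
    (integrable_smul_measure (by norm_num) (by norm_num)).mp (h.2.1 ν hprob hmom)
  rw [h.2.2 ν hprob hmom, integral_smul_measure,
    integral_add_measure (hint.mono_measure (Measure.le_add_right le_rfl))
      (hint.mono_measure (Measure.le_add_left le_rfl)),
    integral_dirac, integral_dirac, h.apply_eq, h.apply_eq]
  simp [div_eq_inv_mul]

end IsExpectedUtilityR

theorem not_isExpectedUtilityR_Kpos (f : ℝ → ℝ) : ¬ IsExpectedUtilityR Kpos f := by
  intro h
  have half := h.midpoint_dirac (-1) 1
  norm_num [Kpos_dirac] at half
  exact Kpos_ne_half _ half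

theorem Kpos_indiffMixtures_not_expectedUtility :
    IndiffMixturesR Kpos ∧
    ¬ ∃ f : ℝ → ℝ, Measurable f ∧
        (∀ ν : Measure ℝ, IsProbabilityMeasure ν → FiniteFirstMomentR ν →
          Integrable f ν) ∧
        (∀ ν : Measure ℝ, IsProbabilityMeasure ν → FiniteFirstMomentR ν →
          Kpos ν = ∫ x, f x ∂ν) :=
  ⟨Kpos_indiffMixtures, fun ⟨f, hf⟩ => not_isExpectedUtilityR_Kpos f hf⟩
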